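/- arXiv:0909.0362 — 5 statements merged into one kernel-verified Lean document; each statement's English description precedes it below -/
import Mathlib

section
/- If p is an odd prime and p ≡ 1 or 4 (mod 5), then the period k(p) of the Fibonacci sequence modulo p divides p − 1. -/
/-!
Since `p ≡ ±1 (mod 5)`, quadratic reciprocity makes `5` a square mod `p`, so `X² = X + 1` has two
distinct roots `φ, ψ` in `𝔽_p`. From `Fₙ (φ - ψ) = φⁿ - ψⁿ` and `φ^(p-1) = ψ^(p-1) = 1` we get
`F_(p-1) ≡ 0` and `F_p ≡ 1`, i.e. the pair `(Fₙ, Fₙ₊₁) mod p` returns to `(0, 1)` after `p - 1`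
steps; the least such return time `k(p)` therefore divides `p - 1`.
-/

open Function Nat

section FibStep

variable {R : Type*}

def fibStep [Add R] (x : R × R) : R × R := (x.2, x.1 + x.2)

theorem fibStep_iterate_zero_one [AddMonoidWithOne R] (n : ℕ) :
    fibStep^[n] ((0 : R), 1) = ((fib n : R), (fib (n + 1) : R)) := by
  induction n with
  | zero => simp
  | succ n ih => rw [iterate_succ_apply', ih, fibStep, fib_add_two, cast_add]

theorem isPeriodicPt_fibStep_iff [AddMonoidWithOne R] (n : ℕ) :
    IsPeriodicPt fibStep n ((0 : R), 1) ↔ (fib n : R) = 0 ∧ (fib (n + 1) : R) = 1 := by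
  rw [IsPeriodicPt, IsFixedPt, fibStep_iterate_zero_one, Prod.mk.injEq]

theorem isPeriodicPt_fibStep_zmod_iff (m n : ℕ) :
    IsPeriodicPt fibStep n ((0 : ZMod m), 1) ↔ fib n ≡ 0 [MOD m] ∧ fib (n + 1) ≡ 1 [MOD m] := by
  rw [isPeriodicPt_fibStep_iff, ← ZMod.natCast_eq_natCast_iff, ← ZMod.natCast_eq_natCast_iff,
    cast_zero, cast_one]

end FibStep

theorem Function.minimalPeriod_eq_of_isLeast {α : Type*} {f : α → α} {x : α} {k : ℕ}
    (hk : IsLeast {n | 0 < n ∧ IsPeriodicPt f n x} k) : minimalPeriod f x = k :=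
  le_antisymm (hk.1.2.minimalPeriod_le hk.1.1)
    (hk.2 ⟨hk.1.2.minimalPeriod_pos hk.1.1, isPeriodicPt_minimalPeriod f x⟩)

section GoldenRoots

variable {R : Type*}

theorem pow_succ_eq_fib_mul_add_fib [CommSemiring R] {x : R} (hx : x ^ 2 = x + 1) (n : ℕ) :
    x ^ (n + 1) = fib (n + 1) * x + fib n := by
  induction n with
  | zero => simp
  | succ n ih =>
    rw [pow_succ, ih, add_mul, mul_assoc, ← sq, hx, fib_add_two, cast_add]
    ring

theorem fib_mul_sub_eq_pow_sub_pow [CommRing R] {x y : R} (hx : x ^ 2 = x + 1)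
    (hy : y ^ 2 = y + 1) (n : ℕ) : (fib n : R) * (x - y) = x ^ n - y ^ n := by
  cases n with
  | zero => simp
  | succ n =>
    rw [pow_succ_eq_fib_mul_add_fib hx, pow_succ_eq_fib_mul_add_fib hy]
    ring

theorem isPeriodicPt_fibStep_of_pow_eq_one [CommRing R] [IsDomain R] {x y : R} (hxy : x ≠ y)
    (hx : x ^ 2 = x + 1) (hy : y ^ 2 = y + 1) {m : ℕ} (hxm : x ^ m = 1) (hym : y ^ m = 1) :
    IsPeriodicPt fibStep m ((0 : R), 1) := by
  have hsub : x - y ≠ 0 := sub_ne_zero.mpr hxy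
  rw [isPeriodicPt_fibStep_iff]
  constructor
  · have h := fib_mul_sub_eq_pow_sub_pow hx hy m
    rw [hxm, hym, sub_self] at h
    exact (mul_eq_zero.mp h).resolve_right hsub
  · have h := fib_mul_sub_eq_pow_sub_pow hx hy (m + 1)
    rw [pow_succ, pow_succ, hxm, hym, one_mul, one_mul] at h
    exact (mul_eq_right₀ hsub).mp h

theorem isPeriodicPt_fibStep_card_sub_one [Field R] [Fintype R] {x y : R} (hxy : x ≠ y)
    (hx : x ^ 2 = x + 1) (hy : y ^ 2 = y + 1) :
    IsPeriodicPt fibStep (Fintype.card R - 1) ((0 : R), 1) := by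
  have ne_zero {z : R} (hz : z ^ 2 = z + 1) : z ≠ 0 := by
    rintro rfl
    simp at hz
  exact isPeriodicPt_fibStep_of_pow_eq_one hxy hx hy
    (FiniteField.pow_card_sub_one_eq_one x (ne_zero hx))
    (FiniteField.pow_card_sub_one_eq_one y (ne_zero hy))

theorem exists_ne_sq_eq_self_add_one [Field R] (h2 : (2 : R) ≠ 0) (h5 : (5 : R) ≠ 0)
    (h : IsSquare (5 : R)) : ∃ x y : R, x ≠ y ∧ x ^ 2 = x + 1 ∧ y ^ 2 = y + 1 := by
  obtain ⟨s, hs⟩ := h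
  have hs0 : s ≠ 0 := by
    rintro rfl
    exact h5 (by simpa using hs)
  refine ⟨(1 + s) / 2, (1 - s) / 2, ?_, ?_, ?_⟩
  · intro h
    field_simp at h
    have h2s : 2 * s = 0 := by linear_combination h
    exact hs0 ((mul_eq_zero.mp h2s).resolve_left h2)
  · field_simp
    linear_combination -hs
  · field_simp
    linear_combination -hs

end GoldenRoots

theorem ZMod.isSquare_five {p : ℕ} [Fact p.Prime] (h5 : p % 5 = 1 ∨ p % 5 = 4) :
    IsSquare (5 : ZMod p) := by
  have : Fact (Nat.Prime 5) := ⟨prime_five⟩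
  have hrec := ZMod.exists_sq_eq_prime_iff_of_mod_four_eq_one (p := 5) (q := p) (by norm_num)
    (by omega)
  rw [cast_ofNat, ← ZMod.natCast_mod] at hrec
  rcases h5 with h | h <;> rw [h] at hrec
  exacts [hrec.mp ⟨1, rfl⟩, hrec.mp ⟨2, rfl⟩]

theorem fib_period_dvd_p_sub_one_general (p : ℕ) (hp : p.Prime)
    (h5 : p % 5 = 1 ∨ p % 5 = 4) (k : ℕ)
    (hk : IsLeast {i : ℕ | 0 < i ∧ Nat.fib i ≡ 0 [MOD p] ∧ Nat.fib (i + 1) ≡ 1 [MOD p]} k) :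
    k ∣ p - 1 := by
  have : Fact p.Prime := ⟨hp⟩
  have : Fact (Nat.Prime 5) := ⟨prime_five⟩
  obtain ⟨x, y, hxy, hx, hy⟩ := exists_ne_sq_eq_self_add_one
    (by exact_mod_cast ZMod.prime_ne_zero p 2 (by omega))
    (by exact_mod_cast ZMod.prime_ne_zero p 5 (by omega)) (ZMod.isSquare_five h5)
  have hperiodic := isPeriodicPt_fibStep_card_sub_one hxy hx hy
  simp_rw [← isPeriodicPt_fibStep_zmod_iff] at hk
  rw [ZMod.card] at hperiodic
  exact minimalPeriod_eq_of_isLeast hk ▸ hperiodic.minimalPeriod_dvd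

theorem fib_period_dvd_p_sub_one (p : ℕ) (hp : p.Prime) (hodd : Odd p)
    (h5 : p % 5 = 1 ∨ p % 5 = 4) (k : ℕ)
    (hk : IsLeast {i : ℕ | 0 < i ∧ Nat.fib i ≡ 0 [MOD p] ∧ Nat.fib (i + 1) ≡ 1 [MOD p]} k) :
    k ∣ p - 1 :=
  fib_period_dvd_p_sub_one_general p hp h5 k hk
end

section
/- Let p be an odd prime with p ≡ 2 or 3 (mod 5), and let λ be an element of the finite field F_{p²} satisfying λ² = λ + 1. Then λ^{2(p+1)} = 1. -/
/-!
The element `2λ - 1` squares to `5`, and `5` is a non-residue mod `p` by quadratic reciprocity,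
since `p ≡ ±2 (mod 5)`. By Euler's criterion the Frobenius therefore negates `2λ - 1`, i.e.
`λ ^ p = 1 - λ` is the other root of `x² - x - 1`. Hence `λ ^ (p + 1) = λ (1 - λ) = -1`.
-/

theorem pow_char_eq_legendreSym_mul_of_sq_eq {R : Type*} [CommRing R] {p : ℕ} [Fact p.Prime]
    [CharP R p] (hp : p ≠ 2) {a : ℤ} {s : R} (hs : s ^ 2 = a) :
    s ^ p = legendreSym p a * s := by
  have euler : (legendreSym p a : R) = (a : R) ^ (p / 2) := by
    simpa only [map_intCast, map_pow] using
      congrArg (ZMod.castHom (dvd_refl p) R) (legendreSym.eq_pow p a)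
  calc s ^ p = (s ^ 2) ^ (p / 2) * s := by
        rw [← pow_mul, ← pow_succ,
          Nat.two_mul_div_two_add_one_of_odd ((Fact.out : p.Prime).odd_of_ne_two hp)]
    _ = legendreSym p a * s := by rw [hs, euler]

theorem legendreSym_five_eq_neg_one {p : ℕ} [Fact p.Prime] (hp : p ≠ 2)
    (h5 : p % 5 = 2 ∨ p % 5 = 3) : legendreSym p 5 = -1 := by
  have : Fact (Nat.Prime 5) := ⟨by norm_num⟩
  rw [show (5 : ℤ) = (5 : ℕ) from rfl,
    legendreSym.quadratic_reciprocity_one_mod_four (p := 5) (by norm_num) hp, legendreSym.mod]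
  rcases h5 with h | h <;>
    rw [← Int.natCast_mod, h, jacobiSym.legendreSym.to_jacobiSym] <;> norm_num

theorem pow_char_eq_one_sub_of_sq_eq_add_one {F : Type*} [Field F] {p : ℕ} [Fact p.Prime]
    [CharP F p] (hp : p ≠ 2) (h5 : legendreSym p 5 = -1) {x : F} (hx : x ^ 2 = x + 1) :
    x ^ p = 1 - x := by
  have hsq : (2 * x - 1) ^ 2 = ((5 : ℤ) : F) := by push_cast; linear_combination 4 * hx
  have hfrob : (2 * x - 1) ^ p = 2 * x ^ p - 1 := by
    rw [show 2 * x - 1 = x - (1 - x) by ring, sub_pow_char, sub_pow_char, one_pow]; ring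
  have hconj := pow_char_eq_legendreSym_mul_of_sq_eq hp hsq
  rw [h5, hfrob, Int.cast_neg, Int.cast_one] at hconj
  have htwo : (2 : F) ≠ 0 := Ring.two_ne_zero (by rwa [ringChar.eq F p])
  apply mul_left_cancel₀ htwo
  linear_combination hconj

theorem lambda_pow_two_p_add_one (p : ℕ) (hp : p.Prime) (hodd : Odd p)
    (h5 : p % 5 = 2 ∨ p % 5 = 3)
    (F : Type*) [Field F] [Fintype F] (hcard : Fintype.card F = p ^ 2)
    (lam : F) (hlam : lam ^ 2 = lam + 1) :
    lam ^ (2 * (p + 1)) = 1 := by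
  have : Fact p.Prime := ⟨hp⟩
  have : CharP F p := charP_of_card_eq_prime_pow hcard
  have hp2 : p ≠ 2 := by rintro rfl; exact absurd hodd (by decide)
  have hconj := pow_char_eq_one_sub_of_sq_eq_add_one hp2 (legendreSym_five_eq_neg_one hp2 h5) hlam
  have hnorm : lam ^ (p + 1) = -1 := by rw [pow_succ, hconj]; linear_combination -hlam
  rw [mul_comm, pow_mul, hnorm, neg_one_sq]
end

section
/- If p is an odd prime with p ≡ 2 or 3 (mod 5), then the period k(p) of the Fibonacci sequence modulo p divides 2(p + 1). -/
/-!
By quadratic reciprocity, `5` is not a square modulo `p`, so `X ^ 2 - X - 1` has a root `φ`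
in an extension of `𝔽_p` but not in `𝔽_p` itself. Since `φ ^ n = F_n φ + F_{n-1}` and `1, φ`
are linearly independent over `𝔽_p`, the period `k(p)` is the multiplicative order of `φ`.
The Frobenius `x ↦ x ^ p` permutes the roots `φ, 1 - φ` and cannot fix `φ`, so `φ ^ p = 1 - φ`,
whence `φ ^ (p + 1) = φ (1 - φ) = -1` and `φ ^ (2 (p + 1)) = 1`.
-/

open Polynomial

theorem ZMod.not_isSquare_five {p : ℕ} [Fact p.Prime] (hp2 : p ≠ 2)
    (h5 : p % 5 = 2 ∨ p % 5 = 3) : ¬IsSquare (5 : ZMod p) := by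
  have reciprocity : IsSquare ((5 : ℕ) : ZMod p) ↔ IsSquare (p : ZMod 5) :=
    (@ZMod.exists_sq_eq_prime_iff_of_mod_four_eq_one 5 p ⟨by norm_num⟩ _ rfl hp2).symm
  rw [Nat.cast_ofNat] at reciprocity
  rw [reciprocity, ← ZMod.natCast_mod]
  rcases h5 with h | h <;> rw [h] <;> decide

theorem sq_ne_self_add_one_of_not_isSquare_five {R : Type*} [CommRing R]
    (h5 : ¬IsSquare (5 : R)) (c : R) : c ^ 2 ≠ c + 1 :=
  fun hc ↦ h5 ⟨2 * c - 1, by linear_combination (-4 : R) * hc⟩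

/-- The constant term is `F_{n-1}`, written as `F_{n+1} - F_n` so that the formula holds
at `n = 0`. -/
theorem pow_eq_fib_mul_add {R : Type*} [CommRing R] {φ : R} (hφ : φ ^ 2 = φ + 1) (n : ℕ) :
    φ ^ n = Nat.fib n * φ + (Nat.fib (n + 1) - Nat.fib n) := by
  induction n with
  | zero => simp
  | succ n ih =>
    rw [pow_succ, ih, Nat.fib_add_two]
    push_cast
    linear_combination (Nat.fib n : R) * hφ

theorem mem_range_algebraMap_of_pow_natCard_eq_self {K L : Type*} [Field K] [Finite K]
    [CommRing L] [IsDomain L] [Algebra K L] {x : L} (hx : x ^ Nat.card K = x) :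
    x ∈ (algebraMap K L).range :=
  splits_X_pow_nat_card_sub_X.mem_range_of_isRoot
    (FiniteField.X_pow_card_sub_X_ne_zero K Finite.one_lt_card) (by simp [hx])

theorem orderOf_eq_of_isLeast {G : Type*} [Monoid G] {x : G} {k : ℕ}
    (hk : IsLeast {n | 0 < n ∧ x ^ n = 1} k) : orderOf x = k := by
  obtain ⟨⟨hk0, hxk⟩, hmin⟩ := hk
  exact (orderOf_eq_iff hk0).2 ⟨hxk, fun m hmk hm0 hxm ↦ (hmin ⟨hm0, hxm⟩).not_gt hmk⟩

section GoldenRoot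

variable {K L : Type*} [Field K] [CommRing L] [Algebra K L] {φ : L}

theorem eq_zero_of_algebraMap_mul_add_eq_zero [Nontrivial L]
    (hφK : φ ∉ (algebraMap K L).range) {a b : K}
    (h : algebraMap K L a * φ + algebraMap K L b = 0) : a = 0 ∧ b = 0 := by
  by_cases ha : a = 0
  · subst ha
    simpa using h
  · refine absurd ⟨-b / a, ?_⟩ hφK
    calc algebraMap K L (-b / a) = algebraMap K L a⁻¹ * -algebraMap K L b := by
          rw [div_eq_inv_mul, map_mul, map_neg]
      _ = algebraMap K L a⁻¹ * (algebraMap K L a * φ) := by rw [eq_neg_of_add_eq_zero_left h]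
      _ = φ := by rw [← mul_assoc, ← map_mul, inv_mul_cancel₀ ha, map_one, one_mul]

theorem pow_eq_one_iff_fib [Nontrivial L] (hφ : φ ^ 2 = φ + 1)
    (hφK : φ ∉ (algebraMap K L).range) (n : ℕ) :
    φ ^ n = 1 ↔ (Nat.fib n : K) = 0 ∧ (Nat.fib (n + 1) : K) = 1 := by
  have hsub : φ ^ n - 1 = algebraMap K L (Nat.fib n) * φ
      + algebraMap K L ((Nat.fib (n + 1) : K) - Nat.fib n - 1) := by
    rw [pow_eq_fib_mul_add hφ]
    simp only [map_sub, map_natCast, map_one]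
    ring
  constructor
  · intro h
    obtain ⟨h0, h1⟩ := eq_zero_of_algebraMap_mul_add_eq_zero hφK (hsub ▸ sub_eq_zero.2 h)
    exact ⟨h0, by linear_combination h1 + h0⟩
  · rintro ⟨h0, h1⟩
    rw [← sub_eq_zero, hsub, h0, h1]
    simp

theorem pow_card_add_one_eq_neg_one [Fintype K] [IsDomain L] (hφ : φ ^ 2 = φ + 1)
    (hφK : φ ∉ (algebraMap K L).range) : φ ^ (Fintype.card K + 1) = -1 := by
  set q := Fintype.card K
  have hfrob : (φ ^ q) ^ 2 = φ ^ q + 1 := by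
    have := congrArg (FiniteField.frobeniusAlgHom K L) hφ
    rwa [map_pow, map_add, map_one, FiniteField.coe_frobeniusAlgHom] at this
  have hfix : φ ^ q ≠ φ := fun h ↦
    hφK (mem_range_algebraMap_of_pow_natCard_eq_self (by rwa [Nat.card_eq_fintype_card]))
  have hconj : φ ^ q = 1 - φ := by
    have : (φ ^ q - φ) * (φ ^ q - (1 - φ)) = 0 := by linear_combination hfrob - hφ
    exact sub_eq_zero.1 ((mul_eq_zero.1 this).resolve_left (sub_ne_zero.2 hfix))
  rw [pow_succ, hconj]
  linear_combination -hφ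

end GoldenRoot

theorem fib_period_dvd_two_p_add_one (p : ℕ) (hp : p.Prime) (hodd : Odd p)
    (h5 : p % 5 = 2 ∨ p % 5 = 3) (k : ℕ)
    (hk : IsLeast {i : ℕ | 0 < i ∧ Nat.fib i ≡ 0 [MOD p] ∧ Nat.fib (i + 1) ≡ 1 [MOD p]} k) :
    k ∣ 2 * (p + 1) := by
  have : Fact p.Prime := ⟨hp⟩
  let L := AlgebraicClosure (ZMod p)
  have hdeg : (X ^ 2 - X - 1 : L[X]).degree = 2 := by compute_degree!
  obtain ⟨φ, hroot⟩ := IsAlgClosed.exists_root _ (hdeg ▸ two_ne_zero)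
  have hφ : φ ^ 2 = φ + 1 := by
    simp only [IsRoot, eval_sub, eval_pow, eval_X, eval_one] at hroot
    linear_combination hroot
  have hφK : φ ∉ (algebraMap (ZMod p) L).range := by
    rintro ⟨c, rfl⟩
    refine sq_ne_self_add_one_of_not_isSquare_five
      (ZMod.not_isSquare_five (hodd.ne_two_of_dvd_nat dvd_rfl) h5) c ((algebraMap _ L).injective ?_)
    simpa using hφ
  have hperiod : orderOf φ = k := by
    refine orderOf_eq_of_isLeast ?_
    convert hk using 3 with i
    simp [pow_eq_one_iff_fib hφ hφK, ← ZMod.natCast_eq_natCast_iff]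
  have hφp : φ ^ (p + 1) = -1 := by
    simpa only [ZMod.card] using pow_card_add_one_eq_neg_one hφ hφK
  rw [← hperiod]
  exact orderOf_dvd_of_pow_eq_one (by rw [mul_comm, pow_mul, hφp, neg_one_sq])
end

section
/- Let p be an odd prime and let A, B be integers with p ∤ B. If the discriminant Δ = A² + 4B is a nonzero quadratic residue modulo p (i.e., Δ ≢ 0 (mod p) and Δ ≡ y² (mod p) for some integer y), then the period k_{A,B}(p) exists and divides p − 1. -/
/-!
Over `𝔽_p` the characteristic polynomial `X² - A X - B` has the distinct nonzero roots
`α, β = (A ± y) / 2`, and Binet's formula `E n · (α - β) = αⁿ - βⁿ` shows that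
`(E i, E (i+1)) ≡ (0, 1)` exactly when `αⁱ = βⁱ = 1`. So the period is the order of
`(α, β)` in `𝔽_p × 𝔽_p`, which divides `p - 1` by Fermat's little theorem.
-/

section LucasSequence

variable {R : Type*} [CommRing R] {α β : R} {e : ℕ → R}

theorem lucas_binet (he0 : e 0 = 0) (he1 : e 1 = 1)
    (hrec : ∀ n, e (n + 2) = (α + β) * e (n + 1) - α * β * e n) (n : ℕ) :
    e n * (α - β) = α ^ n - β ^ n := by
  induction n using Nat.twoStepInduction with
  | zero => simp [he0]
  | one => simp [he1]
  | more n ih₀ ih₁ => linear_combination (α + β) * ih₁ - α * β * ih₀ + (α - β) * hrec n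

theorem lucas_eq_zero_and_succ_eq_one_iff [IsDomain R] (hαβ : α ≠ β)
    (hbinet : ∀ n, e n * (α - β) = α ^ n - β ^ n) (i : ℕ) :
    e i = 0 ∧ e (i + 1) = 1 ↔ α ^ i = 1 ∧ β ^ i = 1 := by
  have hsub : α - β ≠ 0 := sub_ne_zero.mpr hαβ
  have hzero : e i = 0 ↔ α ^ i = β ^ i := by
    rw [← sub_eq_zero (a := α ^ i), ← hbinet, mul_eq_zero, or_iff_left hsub]
  constructor
  · rintro ⟨h₀, h₁⟩
    have hpow : α ^ i = β ^ i := hzero.mp h₀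
    have : (α ^ i - 1) * (α - β) = 0 := by
      linear_combination -(hbinet (i + 1)) + (α - β) * h₁ - β * hpow
    have hα : α ^ i = 1 := sub_eq_zero.mp ((mul_eq_zero.mp this).resolve_right hsub)
    exact ⟨hα, hpow ▸ hα⟩
  · rintro ⟨hα, hβ⟩
    refine ⟨hzero.mpr (hα.trans hβ.symm), mul_right_cancel₀ hsub ?_⟩
    rw [hbinet, pow_succ, pow_succ, hα, hβ, one_mul, one_mul, one_mul]

end LucasSequence

theorem IsOfFinOrder.isLeast_orderOf {M : Type*} [Monoid M] {x : M} (hx : IsOfFinOrder x) :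
    IsLeast {i : ℕ | 0 < i ∧ x ^ i = 1} (orderOf x) :=
  ⟨⟨hx.orderOf_pos, pow_orderOf_eq_one x⟩, fun _ ⟨hi, hxi⟩ => orderOf_le_of_pow_eq_one hi hxi⟩

theorem lucas_period_dvd_card_sub_one {K : Type*} [Field K] [Fintype K] {α β : K} {e : ℕ → K}
    (hα : α ≠ 0) (hβ : β ≠ 0) (hαβ : α ≠ β) (he0 : e 0 = 0) (he1 : e 1 = 1)
    (hrec : ∀ n, e (n + 2) = (α + β) * e (n + 1) - α * β * e n) :
    ∃ k : ℕ, IsLeast {i : ℕ | 0 < i ∧ e i = 0 ∧ e (i + 1) = 1} k ∧ k ∣ Fintype.card K - 1 := by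
  have hfermat : (α, β) ^ (Fintype.card K - 1) = 1 :=
    Prod.mk_eq_one.mpr ⟨FiniteField.pow_card_sub_one_eq_one α hα,
      FiniteField.pow_card_sub_one_eq_one β hβ⟩
  have hfin : IsOfFinOrder (α, β) :=
    isOfFinOrder_iff_pow_eq_one.mpr ⟨_, Nat.sub_pos_of_lt Fintype.one_lt_card, hfermat⟩
  refine ⟨orderOf (α, β), ?_, orderOf_dvd_of_pow_eq_one hfermat⟩
  convert hfin.isLeast_orderOf using 4 with i
  rw [lucas_eq_zero_and_succ_eq_one_iff hαβ (lucas_binet he0 he1 hrec), Prod.pow_mk, Prod.mk_eq_one]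

theorem exists_add_mul_sub_of_sq_eq {K : Type*} [Field K] (h2 : (2 : K) ≠ 0) {a b y : K}
    (h : a ^ 2 + 4 * b = y ^ 2) : ∃ α β : K, α + β = a ∧ α * β = -b ∧ α - β = y :=
  ⟨(a + y) / 2, (a - y) / 2, by field_simp; ring, by field_simp; linear_combination h,
    by field_simp; ring⟩

theorem general_period_dvd_p_sub_one (p : ℕ) (hp : p.Prime) (hodd : Odd p)
    (A B : ℤ) (hB : ¬ (p : ℤ) ∣ B)
    (hΔ0 : ¬ (p : ℤ) ∣ (A ^ 2 + 4 * B))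
    (hΔsq : ∃ y : ℤ, A ^ 2 + 4 * B ≡ y ^ 2 [ZMOD (p : ℤ)])
    (E : ℕ → ℤ) (hE0 : E 0 = 0) (hE1 : E 1 = 1)
    (hErec : ∀ n : ℕ, E (n + 2) = A * E (n + 1) + B * E n) :
    ∃ k : ℕ, IsLeast {i : ℕ | 0 < i ∧ E i ≡ 0 [ZMOD (p : ℤ)] ∧
      E (i + 1) ≡ 1 [ZMOD (p : ℤ)]} k ∧ k ∣ p - 1 := by
  have : Fact p.Prime := ⟨hp⟩
  obtain ⟨y, hy⟩ := hΔsq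
  have h2 : (2 : ZMod p) ≠ 0 := Ring.two_ne_zero (by
    rw [ZMod.ringChar_zmod_n]; rintro rfl; exact Nat.not_even_iff_odd.mpr hodd even_two)
  have hy' : (A : ZMod p) ^ 2 + 4 * B = (y : ZMod p) ^ 2 := by
    exact_mod_cast (ZMod.intCast_eq_intCast_iff _ _ p).mpr hy
  obtain ⟨α, β, hsum, hprod, hdiff⟩ := exists_add_mul_sub_of_sq_eq h2 hy'
  have hy0 : (y : ZMod p) ≠ 0 := by
    have hΔ : ((A ^ 2 + 4 * B : ℤ) : ZMod p) ≠ 0 := by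
      rwa [Ne, ZMod.intCast_zmod_eq_zero_iff_dvd]
    push_cast at hΔ
    exact (pow_ne_zero_iff two_ne_zero).mp (hy' ▸ hΔ)
  obtain ⟨hα, hβ⟩ : α ≠ 0 ∧ β ≠ 0 := by
    rwa [← mul_ne_zero_iff, hprod, neg_ne_zero, Ne, ZMod.intCast_zmod_eq_zero_iff_dvd]
  obtain ⟨k, hk, hkdvd⟩ := lucas_period_dvd_card_sub_one (e := fun n => (E n : ZMod p)) hα hβ
    (sub_ne_zero.mp (hdiff ▸ hy0)) (by simp [hE0]) (by simp [hE1])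
    (fun n => by simp only [hErec, Int.cast_add, Int.cast_mul, hsum, hprod]; ring)
  refine ⟨k, ?_, ZMod.card p ▸ hkdvd⟩
  simpa only [← ZMod.intCast_eq_intCast_iff, Int.cast_zero, Int.cast_one] using hk
end

section
/- Let p be an odd prime and let A, B be integers such that the discriminant Δ = A² + 4B is a quadratic nonresidue modulo p and B² ≡ 1 (mod p). Then the period k_{A,B}(p) exists and divides 2(p + 1). -/
/-!
In a field `L ⊇ 𝔽_p` containing a square root `s` of `Δ`, the roots `α, β = (A ± s) / 2`
of `X² - A X - B` are exchanged by Frobenius, since Euler's criterion gives `s ^ p = -s` for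
a nonresidue `Δ`. Hence `α ^ (p + 1) = α β = -B` and `α ^ (2 (p + 1)) = B² = 1`, likewise
for `β`. Binet's formula `(α - β) E n = α ^ n - β ^ n` then shows that the pair
`(E n, E (n + 1))` returns to `(0, 1)` mod `p` after `2 (p + 1)` steps. The period is the
minimal period of `(0, 1)` under the step map `(x, y) ↦ (y, A y + B x)`, so it divides every
return time.
-/

open Function

def recurrenceStep {R : Type*} [Mul R] [Add R] (a b : R) (x : R × R) : R × R :=
  (x.2, a * x.2 + b * x.1)

section Recurrence

variable {R : Type*} [CommRing R] {a b : R} {u : ℕ → R}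

theorem recurrenceStep_iterate (hrec : ∀ n, u (n + 2) = a * u (n + 1) + b * u n) (n : ℕ) :
    (recurrenceStep a b)^[n] (u 0, u 1) = (u n, u (n + 1)) := by
  induction n with
  | zero => rfl
  | succ n ih => rw [iterate_succ_apply', ih, recurrenceStep, hrec]

theorem sub_mul_eq_pow_sub_pow (hu0 : u 0 = 0) (hu1 : u 1 = 1)
    (hrec : ∀ n, u (n + 2) = a * u (n + 1) + b * u n) {α β : R} (hsum : α + β = a)
    (hprod : α * β = -b) (n : ℕ) : (α - β) * u n = α ^ n - β ^ n := by
  induction n using Nat.twoStepInduction with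
  | zero => simp [hu0]
  | one => simp [hu1]
  | more n ih₀ ih₁ =>
    rw [hrec]
    linear_combination (α + β) * ih₁ - α * β * ih₀ - (α - β) * u (n + 1) * hsum +
      (α - β) * u n * hprod

theorem eq_zero_and_succ_eq_one_of_pow_eq_one [IsDomain R] (hu0 : u 0 = 0) (hu1 : u 1 = 1)
    (hrec : ∀ n, u (n + 2) = a * u (n + 1) + b * u n) {α β : R} (hsum : α + β = a)
    (hprod : α * β = -b) (hne : α ≠ β) {T : ℕ} (hα : α ^ T = 1) (hβ : β ^ T = 1) :
    u T = 0 ∧ u (T + 1) = 1 := by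
  have hne' : α - β ≠ 0 := sub_ne_zero.mpr hne
  have binet := sub_mul_eq_pow_sub_pow hu0 hu1 hrec hsum hprod
  constructor
  · simpa [hα, hβ, hne'] using binet T
  · simpa [pow_succ, hα, hβ, hne'] using binet (T + 1)

end Recurrence

theorem Function.isLeast_minimalPeriod {α : Type*} {f : α → α} {x : α}
    (hx : x ∈ periodicPts f) :
    IsLeast {n | 0 < n ∧ IsPeriodicPt f n x} (minimalPeriod f x) :=
  ⟨⟨minimalPeriod_pos_of_mem_periodicPts hx, isPeriodicPt_minimalPeriod f x⟩,
    fun _ hn => hn.2.minimalPeriod_le hn.1⟩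

theorem add_div_two_mul_sub_div_two {K : Type*} [Field K] (h2 : (2 : K) ≠ 0) {a b s : K}
    (hs : s ^ 2 = a ^ 2 + 4 * b) : (a + s) / 2 * ((a - s) / 2) = -b := by
  field_simp
  linear_combination -hs

namespace ZMod

variable {p : ℕ} [Fact p.Prime] {L : Type*} [Field L] [Algebra (ZMod p) L]

theorem algebraMap_pow_card (x : ZMod p) :
    algebraMap (ZMod p) L x ^ p = algebraMap (ZMod p) L x := by
  rw [← map_pow, pow_card]

theorem two_ne_zero_of_ne_two (hp2 : p ≠ 2) : (2 : L) ≠ 0 := by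
  rw [← map_ofNat (algebraMap (ZMod p) L), _root_.map_ne_zero]
  exact Ring.two_ne_zero (by rwa [ringChar_zmod_n])

theorem pow_card_eq_neg_of_sq_eq (hp2 : p ≠ 2) {δ : ZMod p} (hδ : ¬IsSquare δ) {s : L}
    (hs : s ^ 2 = algebraMap (ZMod p) L δ) : s ^ p = -s := by
  have hδ0 : δ ≠ 0 := by rintro rfl; exact hδ IsSquare.zero
  have euler : δ ^ (p / 2) = -1 :=
    (pow_div_two_eq_neg_one_or_one p hδ0).resolve_left (mt (euler_criterion p hδ0).mpr hδ)
  have hp : 2 * (p / 2) + 1 = p :=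
    Nat.two_mul_div_two_add_one_of_odd ((Fact.out : p.Prime).odd_of_ne_two hp2)
  calc s ^ p = (s ^ 2) ^ (p / 2) * s := by rw [← pow_mul, ← pow_succ, hp]
    _ = -s := by rw [hs, ← map_pow, euler, map_neg, map_one, neg_one_mul]

theorem add_div_two_pow_card {a : ZMod p} {s : L} (hs : s ^ p = -s) :
    ((algebraMap (ZMod p) L a + s) / 2) ^ p = (algebraMap (ZMod p) L a - s) / 2 := by
  have : CharP L p := charP_of_injective_algebraMap' (ZMod p) p
  rw [div_pow, add_pow_char, algebraMap_pow_card, hs, ← sub_eq_add_neg,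
    ← map_ofNat (algebraMap (ZMod p) L), algebraMap_pow_card]

theorem recurrence_two_mul_card_add_one_of_sq_eq (hp2 : p ≠ 2) {a b : ZMod p}
    (hδ : ¬IsSquare (a ^ 2 + 4 * b)) (hb : b ^ 2 = 1) {s : L}
    (hs : s ^ 2 = algebraMap (ZMod p) L (a ^ 2 + 4 * b)) {u : ℕ → ZMod p} (hu0 : u 0 = 0)
    (hu1 : u 1 = 1) (hrec : ∀ n, u (n + 2) = a * u (n + 1) + b * u n) :
    u (2 * (p + 1)) = 0 ∧ u (2 * (p + 1) + 1) = 1 := by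
  let ι := algebraMap (ZMod p) L
  have h2 : (2 : L) ≠ 0 := two_ne_zero_of_ne_two hp2
  have hsp : s ^ p = -s := pow_card_eq_neg_of_sq_eq hp2 hδ hs
  set α := (ι a + s) / 2
  set β := (ι a - s) / 2
  have hsum : α + β = ι a := by
    rw [← add_div, add_add_sub_cancel, ← two_mul, mul_div_cancel_left₀ _ h2]
  have hdiff : α - β = s := by
    rw [← sub_div, add_sub_sub_cancel, ← two_mul, mul_div_cancel_left₀ _ h2]
  have hprod : α * β = -ι b :=
    add_div_two_mul_sub_div_two h2 <| by
      rw [hs]; simp only [ι, map_add, map_pow, map_mul, map_ofNat]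
  have hαp : α ^ p = β := add_div_two_pow_card hsp
  have hβp : β ^ p = α := by
    have hodd := (Fact.out : p.Prime).odd_of_ne_two hp2
    simpa [← sub_eq_add_neg] using
      add_div_two_pow_card (a := a) (s := -s) (by rw [hodd.neg_pow, hsp])
  have hpow {γ γ' : L} (hγ : γ ^ p = γ') (h : γ' * γ = -ι b) : γ ^ (2 * (p + 1)) = 1 := by
    rw [mul_comm, pow_mul, pow_succ γ, hγ, h, neg_sq, ← map_pow, hb, map_one]
  have hs0 : s ≠ 0 := by
    rintro rfl
    rw [zero_pow two_ne_zero, eq_comm, _root_.map_eq_zero] at hs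
    exact hδ (hs ▸ IsSquare.zero)
  obtain ⟨h0, h1⟩ := eq_zero_and_succ_eq_one_of_pow_eq_one (u := fun n => ι (u n))
    (by simp [hu0]) (by simp [hu1]) (fun n => by simp [hrec]) hsum hprod
    (sub_ne_zero.mp (hdiff ▸ hs0)) (hpow hαp (mul_comm α β ▸ hprod)) (hpow hβp hprod)
  exact ⟨ι.injective (by simpa using h0), ι.injective (by simpa using h1)⟩

open Polynomial in
theorem recurrence_two_mul_card_add_one (hp2 : p ≠ 2) {a b : ZMod p}
    (hδ : ¬IsSquare (a ^ 2 + 4 * b)) (hb : b ^ 2 = 1) {u : ℕ → ZMod p} (hu0 : u 0 = 0)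
    (hu1 : u 1 = 1) (hrec : ∀ n, u (n + 2) = a * u (n + 1) + b * u n) :
    u (2 * (p + 1)) = 0 ∧ u (2 * (p + 1) + 1) = 1 := by
  have : Fact (Irreducible (X ^ 2 - C (a ^ 2 + 4 * b))) :=
    ⟨X_pow_sub_C_irreducible_of_prime Nat.prime_two fun y hy => hδ ⟨y, by rw [← hy, sq]⟩⟩
  refine recurrence_two_mul_card_add_one_of_sq_eq hp2 hδ hb
    (s := AdjoinRoot.root (X ^ 2 - C (a ^ 2 + 4 * b))) ?_ hu0 hu1 hrec
  have := AdjoinRoot.eval₂_root (X ^ 2 - C (a ^ 2 + 4 * b))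
  rwa [eval₂_sub, eval₂_X_pow, eval₂_C, sub_eq_zero, ← AdjoinRoot.algebraMap_eq] at this

end ZMod

theorem general_period_dvd_two_p_add_one (p : ℕ) (hp : p.Prime) (hodd : Odd p)
    (A B : ℤ) (hΔ : ¬ ∃ y : ZMod p, y ^ 2 = ((A ^ 2 + 4 * B : ℤ) : ZMod p))
    (hB1 : B ^ 2 ≡ 1 [ZMOD (p : ℤ)])
    (E : ℕ → ℤ) (hE0 : E 0 = 0) (hE1 : E 1 = 1)
    (hErec : ∀ n : ℕ, E (n + 2) = A * E (n + 1) + B * E n) :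
    ∃ k : ℕ, IsLeast {i : ℕ | 0 < i ∧ E i ≡ 0 [ZMOD (p : ℤ)] ∧
      E (i + 1) ≡ 1 [ZMOD (p : ℤ)]} k ∧ k ∣ 2 * (p + 1) := by
  have : Fact p.Prime := ⟨hp⟩
  have hp2 : p ≠ 2 := by rintro rfl; exact Nat.not_odd_iff_even.mpr even_two hodd
  let u : ℕ → ZMod p := fun n => E n
  have hrec (n : ℕ) : u (n + 2) = A * u (n + 1) + B * u n := by simp [u, hErec]
  have hδ : ¬IsSquare ((A : ZMod p) ^ 2 + 4 * B) := fun ⟨y, hy⟩ =>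
    hΔ ⟨y, by push_cast; rw [hy, sq]⟩
  have hB : (B : ZMod p) ^ 2 = 1 := by exact_mod_cast (ZMod.intCast_eq_intCast_iff _ _ p).mpr hB1
  have hiter := recurrenceStep_iterate hrec
  have hstart : (u 0, u 1) = (0, 1) := by simp [u, hE0, hE1]
  have hset :
      {i : ℕ | 0 < i ∧ E i ≡ 0 [ZMOD (p : ℤ)] ∧ E (i + 1) ≡ 1 [ZMOD (p : ℤ)]} =
      {i | 0 < i ∧ IsPeriodicPt (recurrenceStep (A : ZMod p) B) i (0, 1)} := by
    ext i
    simp only [Set.mem_ofPred_eq, IsPeriodicPt, IsFixedPt, ← hstart, hiter, Prod.ext_iff, u,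
      ← ZMod.intCast_eq_intCast_iff, Int.cast_zero, Int.cast_one, hE0, hE1]
  have hT : IsPeriodicPt (recurrenceStep (A : ZMod p) B) (2 * (p + 1)) (0, 1) := by
    obtain ⟨h0, h1⟩ :=
      ZMod.recurrence_two_mul_card_add_one hp2 hδ hB (by simp [u, hE0]) (by simp [u, hE1]) hrec
    rw [IsPeriodicPt, IsFixedPt, ← hstart, hiter, hstart, h0, h1]
  exact ⟨_, hset ▸ isLeast_minimalPeriod (mk_mem_periodicPts (by positivity) hT),
    hT.minimalPeriod_dvd⟩
end
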